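/- The number of τ-runs in a string of length n is O(n/τ); concretely, a string of length n contains at most 2n/τ distinct τ-runs (for τ ≥ 4). -/

import Mathlib

/-- `P` occurs at (0-indexed) position `i` of `T`. -/
def occursAt {α : Type*} (P T : List α) (i : ℕ) : Prop :=
  (T.drop i).take P.length = P

/-- `ρ` is a period of `P`. -/
def isPeriod {α : Type*} (P : List α) (ρ : ℕ) : Prop :=
  0 < ρ ∧ ∀ k, k + ρ < P.length → P[k]? = P[k + ρ]?

/-- The smallest period of `P`. -/
noncomputable def per {α : Type*} (P : List α) : ℕ :=
  sInf {ρ | isPeriod P ρ}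

/-- The fragment of `S` on (0-indexed, inclusive) positions `i..j`. -/
def frag {α : Type*} (S : List α) (i j : ℕ) : List α :=
  (S.drop i).take (j - i + 1)

/-- The fragment `S[i..j]` (0-indexed, inclusive) is a `τ`-run of `S`:
length greater than `3τ`, smallest period at most `τ/4`, and maximal, i.e.,
it cannot be extended in either direction without its smallest period changing. -/
def isTauRun {α : Type*} (S : List α) (τ i j : ℕ) : Prop :=
  i ≤ j ∧ j < S.length ∧ 3 * τ < j - i + 1 ∧ per (frag S i j) ≤ τ / 4 ∧
  (i = 0 ∨ per (frag S (i - 1) j) ≠ per (frag S i j)) ∧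
  (j = S.length - 1 ∨ per (frag S i (j + 1)) ≠ per (frag S i j))

/-!
Let two τ-runs start at `i ≤ i' < i + τ`, with smallest periods `p, q ≤ τ/4`. Since both runs are
longer than `3τ`, they overlap on more than `2τ ≥ p + q` positions, so by the periodicity lemma
(Fine–Wilf) the overlap has period `gcd p q`. The overlap contains a full period of each run, so
this period propagates to both runs, and minimality of `p` and `q` forces `p = gcd p q = q`. The
union of the two runs then has period `p`, and maximality of both runs forces them to be equal.
Hence distinct τ-runs start at least `τ` apart, so `start / τ` is injective on τ-runs and takes
fewer than `n / τ` values.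
-/

def PerOn {α : Type*} (S : List α) (i j ρ : ℕ) : Prop :=
  ∀ k, i ≤ k → k + ρ ≤ j → S[k]? = S[k + ρ]?

theorem forall_of_shift_invariant {P : ℕ → Prop} {lo hi a p : ℕ} (hp : 0 < p)
    (hshift : ∀ k, lo ≤ k → k + p ≤ hi → (P k ↔ P (k + p)))
    (hblock : ∀ k, a ≤ k → k < a + p → P k) (hlo : lo ≤ a) (hhi : a + p ≤ hi + 1) :
    ∀ k, lo ≤ k → k ≤ hi → P k := by
  have above : ∀ k, a ≤ k → k ≤ hi → P k := by
    intro k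
    induction k using Nat.strong_induction_on with
    | _ k ih =>
      intro hak hkhi
      by_cases hk : k < a + p
      · exact hblock k hak hk
      · obtain ⟨m, rfl⟩ : ∃ m, k = m + p := ⟨k - p, by omega⟩
        exact (hshift m (by omega) hkhi).mp (ih m (by omega) (by omega) (by omega))
  intro k hlok hkhi
  induction hd : a - k using Nat.strong_induction_on generalizing k with
  | _ d ih =>
    by_cases hak : a ≤ k
    · exact above k hak hkhi
    · exact (hshift k hlok (by omega)).mpr
        (ih (a - (k + p)) (by omega) (k + p) (by omega) (by omega) rfl)

namespace PerOn

variable {α : Type*} {S : List α}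

theorem mono {i j i' j' ρ : ℕ} (h : PerOn S i j ρ) (hi : i ≤ i') (hj : j' ≤ j) :
    PerOn S i' j' ρ :=
  fun k hk hkj => h k (hi.trans hk) (hkj.trans hj)

theorem union {i j i' j' ρ : ℕ} (h : PerOn S i j ρ) (h' : PerOn S i' j' ρ)
    (hoverlap : i' + ρ ≤ j + 1) : PerOn S i (max j j') ρ := by
  intro k hk hkj
  by_cases hkρ : k + ρ ≤ j
  · exact h k hk hkρ
  · exact h' k (by omega) (by omega)

theorem extend {i j a b p g : ℕ} (hW : PerOn S a b g) (hP : PerOn S i j p) (hp : 0 < p)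
    (hi : i ≤ a) (hj : b ≤ j) (hwindow : a + p + g ≤ b + 1) : PerOn S i j g := by
  have key := forall_of_shift_invariant (P := fun k => S[k]? = S[k + g]?) (lo := i) (hi := j - g)
    hp (fun k hik hk => by
      simp only [hP k hik (by omega), hP (k + g) (by omega) (by omega), Nat.add_right_comm k p g])
    (fun k hak hk => hW k hak (by omega)) hi (by omega)
  exact fun k hik hkj => key k hik (by omega)

end PerOn

section Fragments

variable {α : Type*} {S : List α} {i j : ℕ}

theorem length_frag (hij : i ≤ j) (hj : j < S.length) : (frag S i j).length = j - i + 1 := by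
  rw [frag, List.length_take, List.length_drop]
  omega

theorem getElem?_frag {k : ℕ} (hk : k ≤ j - i) : (frag S i j)[k]? = S[i + k]? := by
  rw [frag, List.getElem?_take_of_lt (by omega), List.getElem?_drop]

theorem hasPeriod_frag_iff {ρ : ℕ} (hij : i ≤ j) (hj : j < S.length) :
    (frag S i j).HasPeriod ρ ↔ PerOn S i j ρ := by
  rw [List.hasPeriod_iff_getElem?, length_frag hij hj]
  constructor
  · intro h k hik hkj
    have hk := h (k - i) (by omega)
    rwa [getElem?_frag (by omega), getElem?_frag (by omega), Nat.add_sub_cancel' hik,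
      ← Nat.add_assoc, Nat.add_sub_cancel' hik] at hk
  · intro h k hk
    rw [getElem?_frag (by omega), getElem?_frag (by omega), ← Nat.add_assoc]
    exact h (i + k) (by omega) (by omega)

theorem isPeriod_frag_iff {ρ : ℕ} (hij : i ≤ j) (hj : j < S.length) :
    isPeriod (frag S i j) ρ ↔ 0 < ρ ∧ PerOn S i j ρ := by
  rw [← hasPeriod_frag_iff hij hj, List.hasPeriod_iff_getElem?, isPeriod]
  exact and_congr_right fun _ => ⟨fun h k hk => h k (by omega), fun h k hk => h k (by omega)⟩

theorem PerOn.gcd {p q : ℕ} (hp : PerOn S i j p) (hq : PerOn S i j q) (hij : i ≤ j)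
    (hj : j < S.length) (hlen : p + q - p.gcd q ≤ j + 1 - i) : PerOn S i j (p.gcd q) := by
  rw [← hasPeriod_frag_iff hij hj] at hp hq ⊢
  exact hp.gcd hq (by rw [length_frag hij hj]; omega)

end Fragments

section SmallestPeriod

variable {α : Type*}

theorem isPeriod_per (P : List α) : isPeriod P (per P) :=
  Nat.sInf_mem (s := {ρ | isPeriod P ρ}) ⟨P.length + 1, by omega, fun k hk => by omega⟩

theorem per_pos (P : List α) : 0 < per P :=
  (isPeriod_per P).1

theorem per_le_of_isPeriod {P : List α} {ρ : ℕ} (h : isPeriod P ρ) : per P ≤ ρ :=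
  Nat.sInf_le h

variable {S : List α} {i j : ℕ}

theorem perOn_per_frag (hij : i ≤ j) (hj : j < S.length) : PerOn S i j (per (frag S i j)) :=
  ((isPeriod_frag_iff hij hj).mp (isPeriod_per _)).2

theorem per_frag_le {ρ : ℕ} (hij : i ≤ j) (hj : j < S.length) (hρ : 0 < ρ)
    (h : PerOn S i j ρ) : per (frag S i j) ≤ ρ :=
  per_le_of_isPeriod ((isPeriod_frag_iff hij hj).mpr ⟨hρ, h⟩)

theorem per_frag_eq_of_perOn {i' j' : ℕ} (hi : i' ≤ i) (hij : i ≤ j) (hj : j ≤ j')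
    (hj' : j' < S.length) (h : PerOn S i' j' (per (frag S i j))) :
    per (frag S i' j') = per (frag S i j) :=
  le_antisymm (per_frag_le (by omega) hj' (per_pos _) h)
    (per_frag_le hij (by omega) (per_pos _)
      ((perOn_per_frag (by omega) hj').mono hi hj))

theorem per_frag_eq_of_overlap {i' j' : ℕ} (hij : i ≤ j) (hj : j < S.length) (hij' : i' ≤ j')
    (hj' : j' < S.length) (hi : i ≤ i')
    (hoverlap : i' + per (frag S i j) + per (frag S i' j') ≤ min j j' + 1) :
    per (frag S i j) = per (frag S i' j') := by
  set p := per (frag S i j)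
  set q := per (frag S i' j')
  have hP : PerOn S i j p := perOn_per_frag hij hj
  have hQ : PerOn S i' j' q := perOn_per_frag hij' hj'
  have hp : 0 < p := per_pos _
  have hq : 0 < q := per_pos _
  have hgcd : PerOn S i' (min j j') (p.gcd q) :=
    (hP.mono hi (min_le_left _ _)).gcd (hQ.mono le_rfl (min_le_right _ _)) (by omega)
      (by omega) (by omega)
  have hgp : p.gcd q ≤ p := Nat.gcd_le_left q hp
  have hgq : p.gcd q ≤ q := Nat.gcd_le_right (m := p) (n := q) hq
  have hpg : p ≤ p.gcd q := per_frag_le hij hj (Nat.gcd_pos_of_pos_left q hp)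
    (hgcd.extend hP hp hi (min_le_left _ _) (by omega))
  have hqg : q ≤ p.gcd q := per_frag_le hij' hj' (Nat.gcd_pos_of_pos_left q hp)
    (hgcd.extend hQ hq le_rfl (min_le_right _ _) (by omega))
  omega

end SmallestPeriod

namespace isTauRun

variable {α : Type*} {S : List α} {τ i j : ℕ}

theorem start_le_of_perOn {i' : ℕ} (h : isTauRun S τ i j)
    (hP : PerOn S i' j (per (frag S i j))) : i ≤ i' := by
  obtain ⟨hij, hj, -, -, hleft, -⟩ := h
  by_contra! hi'
  exact hleft.resolve_left (by omega)
    (per_frag_eq_of_perOn (by omega) hij le_rfl hj (hP.mono (by omega) le_rfl))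

theorem end_le_of_perOn {j' : ℕ} (h : isTauRun S τ i j)
    (hP : PerOn S i j' (per (frag S i j))) (hj' : j' < S.length) : j' ≤ j := by
  obtain ⟨hij, hj, -, -, -, hright⟩ := h
  by_contra! hlt
  exact hright.resolve_left (by omega)
    (per_frag_eq_of_perOn le_rfl hij (by omega) (by omega) (hP.mono le_rfl (by omega)))

theorem eq_of_start_lt {i' j' : ℕ} (h : isTauRun S τ i j) (h' : isTauRun S τ i' j')
    (hi : i ≤ i') (hi' : i' < i + τ) : (i, j) = (i', j') := by
  have ⟨hij, hj, hlen, hper, _⟩ := h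
  have ⟨hij', hj', hlen', hper', _⟩ := h'
  have hpq : per (frag S i j) = per (frag S i' j') :=
    per_frag_eq_of_overlap hij hj hij' hj' hi (by omega)
  have hunion : PerOn S i (max j j') (per (frag S i j)) :=
    (perOn_per_frag hij hj).union (hpq ▸ perOn_per_frag hij' hj') (by omega)
  obtain rfl : i = i' :=
    le_antisymm hi (h'.start_le_of_perOn (hpq ▸ hunion.mono le_rfl (le_max_right _ _)))
  have hjj := h.end_le_of_perOn hunion (by omega)
  have hjj' := h'.end_le_of_perOn (hpq ▸ hunion) (by omega)
  rw [Prod.mk.injEq]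
  omega

end isTauRun

theorem ncard_le_div_of_separated {β : Type*} {s : Set β} (f : β → ℕ) {τ N : ℕ} (hτ : 0 < τ)
    (hsep : ∀ x ∈ s, ∀ y ∈ s, f x ≤ f y → f y < f x + τ → x = y)
    (hN : ∀ x ∈ s, f x + τ ≤ N) : s.ncard ≤ N / τ := by
  have div_lt {m n : ℕ} (h : m + τ ≤ n) : m / τ < n / τ := by
    have := Nat.div_le_div_right (c := τ) h
    rw [Nat.add_div_right m hτ] at this
    omega
  have hinj : Set.InjOn (fun x => f x / τ) s := by
    intro x hx y hy hxy
    rcases le_total (f x) (f y) with hle | hle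
    · exact hsep x hx y hy hle (by by_contra! h; exact (div_lt h).ne hxy)
    · exact (hsep y hy x hx hle (by by_contra! h; exact (div_lt h).ne' hxy)).symm
  calc s.ncard = ((fun x => f x / τ) '' s).ncard := hinj.ncard_image.symm
    _ ≤ (Set.Iio (N / τ)).ncard :=
      Set.ncard_le_ncard (Set.image_subset_iff.mpr fun x hx => div_lt (hN x hx))
        (Set.finite_Iio _)
    _ = N / τ := by rw [← Finset.coe_Iio, Set.ncard_coe_finset, Nat.card_Iio]

/-- A string of length `n` contains at most `2n/τ` distinct `τ`-runs. -/
theorem number_of_tau_runs {α : Type*} (S : List α) (τ : ℕ) (hτ : 4 ≤ τ) :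
    Set.ncard {p : ℕ × ℕ | isTauRun S τ p.1 p.2} ≤ 2 * S.length / τ := by
  refine (ncard_le_div_of_separated Prod.fst (N := S.length) (by omega) ?_ ?_).trans
    (Nat.div_le_div_right (by omega))
  · rintro ⟨i, j⟩ h ⟨i', j'⟩ h' hi hi'
    exact h.eq_of_start_lt h' hi hi'
  · rintro ⟨i, j⟩ ⟨hij, hj, hlen, -⟩
    dsimp only
    omega
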